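/- Under the mixed Moore Cayley hypotheses, suppose further that H is a subgroup of G of index 2, and set s₁ = |S₁ ∩ H| and s₂ = |S₂ ∩ H|. Then s₁ + s₂ = (2(z+r) − 1 ± √(4r−3))/4; precisely, as integers, (4(s₁ + s₂) − (2(z + r) − 1))² = 4r − 3. -/

import Mathlib

/-!
Let `χ` be the sign character of `H` and `a = ∑_{s ∈ S} χ s` with `S = S₁ ∪ S₂`. In a mixed Moore
graph every `g ∉ {1} ∪ S` is a product `s t` of a unique pair with `s t ≠ 1`; the pairs with
`s t = 1` are the `r` pairs `(s, s⁻¹)`, `s ∈ S₁`. Summing the nontrivial character `χ` over `G`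
therefore gives `0 = 1 + a + (a² - r)`, and `4(s₁ + s₂) - (2(z + r) - 1) = 2a + 1` has square
`4(a² + a) + 1 = 4r - 3`.
-/

open scoped Pointwise

open Finset

namespace Subgroup

variable {G : Type*} [Group G] (H : Subgroup G) [DecidablePred (· ∈ H)] (hH : H.index = 2)

def indexTwoChar : G →* ℤ where
  toFun g := if g ∈ H then 1 else -1
  map_one' := by simp [H.one_mem]
  map_mul' a b := by
    simp only [mul_mem_iff_of_index_two hH]
    split_ifs <;> simp_all

theorem indexTwoChar_ne_one : H.indexTwoChar hH ≠ 1 := by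
  obtain ⟨g, hg⟩ : ∃ g, g ∉ H := by
    by_contra! h
    have : H = ⊤ := eq_top_iff.2 fun g _ => h g
    simp [this] at hH
  intro h
  simpa [indexTwoChar, hg] using DFunLike.congr_fun h g

theorem sum_indexTwoChar (S : Finset G) :
    ∑ s ∈ S, H.indexTwoChar hH s = 2 * #{s ∈ S | s ∈ H} - #S := by
  have hsplit := card_filter_add_card_filter_not (s := S) (· ∈ H)
  simp only [indexTwoChar, MonoidHom.coe_mk, OneHom.coe_mk, sum_ite, sum_const, smul_neg,
    nsmul_eq_mul, mul_one]
  linear_combination (norm := push_cast) -(congrArg (Nat.cast : ℕ → ℤ) hsplit)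
  ring

end Subgroup

section Pairs

variable {G : Type*} [Group G] [DecidableEq G]

theorem Finset.card_filter_mul_eq_one (S : Finset G) :
    #{p ∈ S ×ˢ S | p.1 * p.2 = 1} = #(S ∩ S⁻¹) := by
  refine card_nbij' Prod.fst (fun s => (s, s⁻¹)) ?_ ?_ ?_ ?_
  · rintro ⟨a, b⟩ h
    simp only [coe_filter, mem_product, Set.mem_ofPred_eq] at h
    obtain ⟨⟨ha, hb⟩, hab⟩ := h
    exact mem_inter.2 ⟨ha, mem_inv'.2 (eq_inv_of_mul_eq_one_right hab ▸ hb)⟩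
  · intro s hs
    simp_all
  · rintro ⟨a, b⟩ h
    simp only [coe_filter, mem_product, Set.mem_ofPred_eq] at h
    simp [eq_inv_of_mul_eq_one_right h.2]
  · intro s _
    rfl

theorem Finset.union_inter_inv_union_eq {S₁ S₂ : Finset G} (hdisj : Disjoint S₁ S₂)
    (hS₁inv : S₁⁻¹ = S₁) (hS₂inv : S₂ ∩ S₂⁻¹ = ∅) :
    (S₁ ∪ S₂) ∩ (S₁ ∪ S₂)⁻¹ = S₁ := by
  ext g
  have h₁ : g⁻¹ ∈ S₁ ↔ g ∈ S₁ := by rw [← mem_inv', hS₁inv]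
  have h₂ : g ∈ S₂ → g⁻¹ ∉ S₂ := fun hg hg' => by
    simpa [hS₂inv] using mem_inter.2 ⟨hg, mem_inv'.2 hg'⟩
  have h₁₂ : g ∈ S₁ → g ∉ S₂ := fun hg => disjoint_left.1 hdisj hg
  simp only [mem_inter, mem_union, mem_inv', h₁]
  tauto

end Pairs

section Moore

variable {G : Type*} [Group G] [DecidableEq G] [Fintype G]

variable {S : Finset G} (hone : 1 ∉ S)
  (hdiam : ∀ g : G, g ≠ 1 → g ∈ S ∨ ∃ s ∈ S, ∃ t ∈ S, g = s * t)
  (hcard : 1 + #S + #{p ∈ S ×ˢ S | p.1 * p.2 ≠ 1} ≤ Fintype.card G)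
include hone hdiam hcard

/-- Surjectivity comes from the diameter condition; the Moore bound `hcard` then leaves no room for
a product to land in `{1} ∪ S` or to be hit twice. -/
theorem Finset.bijOn_mul_of_moore :
    Set.BijOn (fun p : G × G => p.1 * p.2) ↑{p ∈ S ×ˢ S | p.1 * p.2 ≠ 1}
      ↑(univ \ insert 1 S) := by
  set P := {p ∈ S ×ˢ S | p.1 * p.2 ≠ 1}
  have hsurj : univ \ insert 1 S ⊆ P.image (fun p => p.1 * p.2) := by
    intro g hg
    simp only [mem_sdiff, mem_univ, mem_insert, not_or, true_and] at hg
    obtain h | ⟨s, hs, t, ht, rfl⟩ := hdiam g hg.1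
    · exact absurd h hg.2
    · exact mem_image.2 ⟨(s, t), mem_filter.2 ⟨mem_product.2 ⟨hs, ht⟩, hg.1⟩, rfl⟩
  have hcompl : #P ≤ #(univ \ insert 1 S) := by
    rw [card_sdiff_of_subset (subset_univ _), card_univ, card_insert_of_notMem hone]
    omega
  have himage : P.image (fun p => p.1 * p.2) = univ \ insert 1 S :=
    (eq_of_subset_of_card_le hsurj (card_image_le.trans hcompl)).symm
  have hinj : Set.InjOn (fun p : G × G => p.1 * p.2) P := by
    rw [← card_image_iff]
    exact le_antisymm card_image_le (himage ▸ hcompl)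
  refine ⟨?_, hinj, ?_⟩
  · intro p hp
    rw [← himage, coe_image]
    exact Set.mem_image_of_mem _ hp
  · rw [← himage, coe_image]
    exact Set.surjOn_image _ _

theorem Finset.sq_sum_add_sum_add_one_of_moore {R : Type*} [CommRing R] [IsDomain R]
    (χ : G →* R) (hχ : χ ≠ 1) :
    (∑ s ∈ S, χ s) ^ 2 + ∑ s ∈ S, χ s + 1 = #{p ∈ S ×ˢ S | p.1 * p.2 = 1} := by
  have hsplit : ∑ g, χ g = χ 1 + ∑ s ∈ S, χ s
      + ∑ p ∈ S ×ˢ S with p.1 * p.2 ≠ 1, χ (p.1 * p.2) := by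
    obtain ⟨hmaps, hinj, hsurj⟩ := bijOn_mul_of_moore hone hdiam hcard
    rw [← sum_sdiff (subset_univ (insert 1 S)), sum_insert hone, add_comm]
    exact congrArg _ (sum_nbij _ hmaps hinj hsurj fun _ _ => rfl).symm
  have hpairs : ∑ p ∈ S ×ˢ S, χ (p.1 * p.2) = (∑ s ∈ S, χ s) ^ 2 := by
    simp only [map_mul, sum_product, sq, sum_mul_sum]
  have htrivial : ∑ p ∈ S ×ˢ S with p.1 * p.2 = 1, χ (p.1 * p.2)
      = #{p ∈ S ×ˢ S | p.1 * p.2 = 1} := by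
    rw [sum_congr rfl fun p hp => by rw [(mem_filter.1 hp).2, map_one], sum_const, nsmul_one]
  have := sum_filter_add_sum_filter_not (S ×ˢ S) (fun p => p.1 * p.2 = 1) (fun p => χ (p.1 * p.2))
  rw [sum_hom_units_eq_zero χ hχ, map_one] at hsplit
  linear_combination -this + htrivial - hpairs - hsplit

end Moore

theorem mixed_moore_cayley_index_two_general {G : Type*} [Group G] [Fintype G] [DecidableEq G]
    (r z : ℕ)
    (S₁ S₂ : Finset G)
    (hcard : Fintype.card G = (z + r) ^ 2 + z + 1)
    (hone : (1 : G) ∉ S₁ ∪ S₂)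
    (hdisj : Disjoint S₁ S₂)
    (hS₁inv : S₁⁻¹ = S₁) (hS₁card : S₁.card = r)
    (hS₂inv : S₂ ∩ S₂⁻¹ = ∅) (hS₂card : S₂.card = z)
    (hdiam : ∀ g : G, g ≠ 1 →
      g ∈ S₁ ∪ S₂ ∨ ∃ s ∈ S₁ ∪ S₂, ∃ t ∈ S₁ ∪ S₂, g = s * t)
    (H : Subgroup G) [DecidablePred (· ∈ H)] (hH : H.index = 2) :
    (4 * (((S₁.filter (· ∈ H)).card + (S₂.filter (· ∈ H)).card : ℤ))
        - (2 * ((z : ℤ) + r) - 1)) ^ 2 = 4 * (r : ℤ) - 3 := by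
  set S := S₁ ∪ S₂
  have hS : #S = r + z := by rw [card_union_of_disjoint hdisj, hS₁card, hS₂card]
  have hloops : #{p ∈ S ×ˢ S | p.1 * p.2 = 1} = r := by
    rw [card_filter_mul_eq_one, union_inter_inv_union_eq hdisj hS₁inv hS₂inv, hS₁card]
  have hmoore : 1 + #S + #{p ∈ S ×ˢ S | p.1 * p.2 ≠ 1} ≤ Fintype.card G := by
    have := card_filter_add_card_filter_not (s := S ×ˢ S) (fun p => p.1 * p.2 = 1)
    rw [card_product, hS, hloops] at this
    rw [hcard]
    nlinarith
  have hkey := sq_sum_add_sum_add_one_of_moore hone hdiam hmoore _ (H.indexTwoChar_ne_one hH)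
  rw [hloops, H.sum_indexTwoChar hH, filter_union,
    card_union_of_disjoint (disjoint_filter_filter hdisj), hS] at hkey
  push_cast at hkey
  linear_combination 4 * hkey

/-- Under the mixed Moore Cayley hypotheses, if `H` is an index 2 subgroup of `G` and `s₁ = |S₁ ∩ H|`, `s₂ = |S₂ ∩ H|`, then `s₁ + s₂ = (2(z+r) − 1 ± √(4r−3))/4`, i.e. `(4(s₁+s₂) − (2(z+r) − 1))² = 4r − 3` as integers. -/
theorem mixed_moore_cayley_index_two {G : Type*} [Group G] [Fintype G] [DecidableEq G]
    (r z : ℕ) (hr : 0 < r) (hz : 0 < z)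
    (S₁ S₂ : Finset G)
    (hcard : Fintype.card G = (z + r) ^ 2 + z + 1)
    (hone : (1 : G) ∉ S₁ ∪ S₂)
    (hdisj : Disjoint S₁ S₂)
    (hS₁inv : S₁⁻¹ = S₁) (hS₁card : S₁.card = r)
    (hS₂inv : S₂ ∩ S₂⁻¹ = ∅) (hS₂card : S₂.card = z)
    (hdiam : ∀ g : G, g ≠ 1 →
      g ∈ S₁ ∪ S₂ ∨ ∃ s ∈ S₁ ∪ S₂, ∃ t ∈ S₁ ∪ S₂, g = s * t)
    (H : Subgroup G) [DecidablePred (· ∈ H)] (hH : H.index = 2) :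
    (4 * (((S₁.filter (· ∈ H)).card + (S₂.filter (· ∈ H)).card : ℤ))
        - (2 * ((z : ℤ) + r) - 1)) ^ 2 = 4 * (r : ℤ) - 3 :=
  mixed_moore_cayley_index_two_general r z S₁ S₂ hcard hone hdisj hS₁inv hS₁card hS₂inv hS₂card
    hdiam H hH
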